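/- Let ν₁ : Borel(X) → B(H₁) and ν₂ : Borel(X) → B(H₂) be quantum probability measures that are cleanly equivalent: ν₂ = Φ* ∘ ν₁ and ν₁ = Ψ* ∘ ν₂ for unital completely positive maps Φ* : B(H₁) → B(H₂) and Ψ* : B(H₂) → B(H₁). If ν₁ is nonatomic, then ν₂ is nonatomic. -/
import Mathlib


open scoped InnerProductSpace
open MeasureTheory Matrix

/-- A positive operator valued measure on the measurable sets of `X` with values in the
bounded operators on `H`: it is zero on `∅`, takes positive semidefinite values, and is
weakly countably additive. -/
structure POVM (X : Type*) [MeasurableSpace X] (H : Type*) [NormedAddCommGroup H]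
    [InnerProductSpace ℂ H] [CompleteSpace H] where
  toFun : Set X → (H →L[ℂ] H)
  empty' : toFun ∅ = 0
  pos' : ∀ E : Set X, MeasurableSet E → 0 ≤ toFun E
  additive' : ∀ E : ℕ → Set X, (∀ n, MeasurableSet (E n)) →
    Pairwise (Function.onFun Disjoint E) →
    ∀ x y : H, HasSum (fun n => ⟪toFun (E n) x, y⟫_ℂ) ⟪toFun (⋃ n, E n) x, y⟫_ℂ

/-- `A` is an atom of the POVM `ν`: a measurable set of nonzero measure each of whose
measurable subsets has measure `0` or measure `ν(A)`. -/
def POVM.IsAtomOf {X : Type*} [MeasurableSpace X] {H : Type*} [NormedAddCommGroup H]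
    [InnerProductSpace ℂ H] [CompleteSpace H] (ν : POVM X H) (A : Set X) : Prop :=
  MeasurableSet A ∧ ν.toFun A ≠ 0 ∧
    ∀ B : Set X, B ⊆ A → MeasurableSet B → ν.toFun B = 0 ∨ ν.toFun B = ν.toFun A

/-- A POVM is atomic if every measurable set of nonzero measure contains an atom. -/
def POVM.Atomic {X : Type*} [MeasurableSpace X] {H : Type*} [NormedAddCommGroup H]
    [InnerProductSpace ℂ H] [CompleteSpace H] (ν : POVM X H) : Prop :=
  ∀ E : Set X, MeasurableSet E → ν.toFun E ≠ 0 → ∃ A : Set X, A ⊆ E ∧ ν.IsAtomOf A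

/-- A POVM is nonatomic if it has no atoms. -/
def POVM.Nonatomic {X : Type*} [MeasurableSpace X] {H : Type*} [NormedAddCommGroup H]
    [InnerProductSpace ℂ H] [CompleteSpace H] (ν : POVM X H) : Prop :=
  ∀ A : Set X, ¬ ν.IsAtomOf A

/-- A linear map between the bounded operators on two Hilbert spaces is completely
positive if it maps positive matrices of operators (i.e. those of the form `b* b`) to
positive matrices of operators. -/
def IsCompletelyPositive {H₁ : Type*} [NormedAddCommGroup H₁] [InnerProductSpace ℂ H₁]
    [CompleteSpace H₁] {H₂ : Type*} [NormedAddCommGroup H₂] [InnerProductSpace ℂ H₂]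
    [CompleteSpace H₂] (Φ : (H₁ →L[ℂ] H₁) →ₗ[ℂ] (H₂ →L[ℂ] H₂)) : Prop :=
  ∀ (n : ℕ) (a : Matrix (Fin n) (Fin n) (H₁ →L[ℂ] H₁)),
    (∃ b, a = bᴴ * b) → ∃ c, a.map (⇑Φ) = cᴴ * c

/-- If quantum probability measures `ν₁`, `ν₂` are cleanly equivalent, i.e.
`ν₂ = Φ ∘ ν₁` and `ν₁ = Ψ ∘ ν₂` for unital completely positive (duals of quantum
channels) `Φ`, `Ψ`, and `ν₁` is nonatomic, then `ν₂` is nonatomic. -/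
theorem cleanly_equivalent_nonatomic {X : Type*} [MeasurableSpace X]
    {H₁ : Type*} [NormedAddCommGroup H₁] [InnerProductSpace ℂ H₁] [CompleteSpace H₁]
    {H₂ : Type*} [NormedAddCommGroup H₂] [InnerProductSpace ℂ H₂] [CompleteSpace H₂]
    (ν₁ : POVM X H₁) (ν₂ : POVM X H₂)
    (hν₁1 : ν₁.toFun Set.univ = 1) (hν₂1 : ν₂.toFun Set.univ = 1)
    (Φ : (H₁ →L[ℂ] H₁) →ₗ[ℂ] (H₂ →L[ℂ] H₂)) (Ψ : (H₂ →L[ℂ] H₂) →ₗ[ℂ] (H₁ →L[ℂ] H₁))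
    (hΦ1 : Φ 1 = 1) (hΨ1 : Ψ 1 = 1)
    (hΦcp : IsCompletelyPositive Φ) (hΨcp : IsCompletelyPositive Ψ)
    (hΦν : ∀ E : Set X, MeasurableSet E → ν₂.toFun E = Φ (ν₁.toFun E))
    (hΨν : ∀ E : Set X, MeasurableSet E → ν₁.toFun E = Ψ (ν₂.toFun E))
    (h : ν₁.Nonatomic) : ν₂.Nonatomic := by
  intro A hA
  obtain ⟨hAm, hAne, hAsub⟩ := hA
  refine h A ⟨hAm, ?_, ?_⟩
  · intro h0
    exact hAne (by rw [hΦν A hAm, h0, map_zero])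
  · intro B hBA hBm
    rcases hAsub B hBA hBm with h0 | heq
    · left; rw [hΨν B hBm, h0, map_zero]
    · right; rw [hΨν B hBm, heq, ← hΨν A hAm]
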